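/- arXiv:2203.11422 — 4 statements merged into one kernel-verified Lean document; each statement's English description precedes it below -/
import Mathlib

section
/- Let p be an odd prime and n a positive even integer. Write n = p^t · m with p ∤ m. Then for the power series f(X) = ((1+X)^n − 1)/(2+X) ∈ Z_p[[X]] (note 2+X is a unit in Z_p[[X]] since p is odd), the μ-invariant of f is 0 and the λ-invariant of f is p^t. -/
/-!
Everything is read off the reduction `f̄ ∈ 𝔽_p⟦X⟧`: the factor `p ^ μ` kills `f̄` unless `μ = 0`,
and for a Weierstrass factorization `f = P u` the degree of `P` is the `X`-adic order of `f̄`.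
In characteristic `p`, `(1 + X) ^ (p ^ t * m) - 1 = (1 + X ^ p ^ t) ^ m - 1` is `X ^ p ^ t` times
a series with constant term `m ≠ 0`, and `2 + X` has nonzero constant term because `p` is odd,
so `f̄` has order exactly `p ^ t`.
-/

open PowerSeries IsLocalRing

namespace PowerSeries

variable {K : Type*} [CommRing K] [IsDomain K] (p : ℕ) [ExpChar K p]

theorem order_one_add_X_pow_mul_sub_one (t : ℕ) {m : ℕ} (hm : (m : K) ≠ 0) :
    ((1 + X : K⟦X⟧) ^ (p ^ t * m) - 1).order = (p ^ t : ℕ) := by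
  have := expChar_of_injective_ringHom (C_injective (R := K)) p
  set S : K⟦X⟧ := ∑ i ∈ Finset.range m, (1 + X ^ p ^ t) ^ i
  have hfactor : (1 + X : K⟦X⟧) ^ (p ^ t * m) - 1 = S * X ^ p ^ t := by
    rw [pow_mul, add_pow_expChar_pow, one_pow, ← geom_sum_mul, add_sub_cancel_left]
  have hS : S.order = 0 := by
    rw [← not_ne_iff, order_ne_zero_iff_constCoeff_eq_zero]
    simpa [S, zero_pow (pow_ne_zero t (expChar_pos K p).ne')] using hm
  rw [hfactor, order_mul, hS, order_X_pow, zero_add]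

theorem order_eq_of_mul_two_add_X_eq (h2 : (2 : K) ≠ 0) (t : ℕ) {m : ℕ} (hm : (m : K) ≠ 0)
    {g : K⟦X⟧} (hg : g * (2 + X) = (1 + X) ^ (p ^ t * m) - 1) : g.order = (p ^ t : ℕ) := by
  have h2X : (2 + X : K⟦X⟧).order = 0 := by
    rw [← not_ne_iff, order_ne_zero_iff_constCoeff_eq_zero]
    simpa [map_ofNat] using h2
  simpa [order_one_add_X_pow_mul_sub_one p t hm, order_mul, h2X] using congrArg order hg

end PowerSeries

theorem eq_zero_of_map_residue_C_pow_mul_ne_zero {A : Type*} [CommRing A] [IsLocalRing A]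
    {ϖ : A} (hϖ : ϖ ∈ maximalIdeal A) {μ : ℕ} {g : A⟦X⟧}
    (h : (C (ϖ ^ μ) * g).map (residue A) ≠ 0) : μ = 0 := by
  contrapose! h
  rw [map_mul, map_C, map_pow, (residue_eq_zero_iff ϖ).mpr hϖ, zero_pow h, map_zero, zero_mul]

instance PadicInt.charP_residueField (p : ℕ) [Fact p.Prime] : CharP (ResidueField ℤ_[p]) p :=
  charP_of_injective_ringHom (f := (PadicInt.residueField (p := p)).symm.toRingHom)
    (RingEquiv.injective _) p

theorem stmt2_general (p : ℕ) [Fact p.Prime] (hodd : Odd p)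
    (n t m : ℕ) (hnm : n = p ^ t * m) (hm : ¬ p ∣ m)
    (f : PowerSeries ℤ_[p])
    (hfdef : f * (2 + PowerSeries.X) = (1 + PowerSeries.X) ^ n - 1)
    (μ : ℕ) (P : Polynomial ℤ_[p]) (u : PowerSeries ℤ_[p])
    (hu : IsUnit u) (hPmon : P.Monic)
    (hPdist : ∀ i < P.natDegree, (p : ℤ_[p]) ∣ P.coeff i)
    (hdec : f = PowerSeries.C ((p : ℤ_[p]) ^ μ) * (P : PowerSeries ℤ_[p]) * u) :
    μ = 0 ∧ P.natDegree = p ^ t := by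
  have h2 : (2 : ResidueField ℤ_[p]) ≠ 0 :=
    Ring.two_ne_zero (by rw [ringChar.eq _ p]; rintro rfl; exact absurd hodd (by decide))
  have hm' : (m : ResidueField ℤ_[p]) ≠ 0 := by rwa [Ne, CharP.cast_eq_zero_iff _ p]
  have horder : (f.map (residue ℤ_[p])).order = (p ^ t : ℕ) := by
    refine order_eq_of_mul_two_add_X_eq p h2 t hm' ?_
    simpa [map_ofNat, hnm] using congrArg (map (residue ℤ_[p])) hfdef
  have hpmax : (p : ℤ_[p]) ∈ maximalIdeal ℤ_[p] := by
    rw [PadicInt.maximalIdeal_eq_span_p]; exact Ideal.mem_span_singleton_self _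
  obtain rfl : μ = 0 := eq_zero_of_map_residue_C_pow_mul_ne_zero hpmax (g := P * u) <| by
    rw [← mul_assoc, ← hdec, ← order_finite_iff_ne_zero, horder]; exact ENat.natCast_lt_top _
  have hW : f.IsWeierstrassFactorization P u :=
    { isDistinguishedAt :=
        { mem := fun hi => by
            rw [PadicInt.maximalIdeal_eq_span_p]; exact Ideal.mem_span_singleton.mpr (hPdist _ hi)
          monic := hPmon }
      isUnit := hu
      eq_mul := by simpa using hdec }
  exact ⟨rfl, by rw [hW.natDegree_eq_toNat_order_map, horder, ENat.toNat_natCast]⟩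

/-- For `p` odd, `n = p^t m` positive even with `p ∤ m`, the power
series `f = ((1+X)^n − 1)/(2+X) ∈ ℤ_p[[X]]` has `μ(f) = 0` and `λ(f) = p^t`. -/
theorem stmt2 (p : ℕ) [Fact p.Prime] (hodd : Odd p)
    (n t m : ℕ) (hn : 0 < n) (hne : Even n) (hnm : n = p ^ t * m) (hm : ¬ p ∣ m)
    (f : PowerSeries ℤ_[p])
    (hfdef : f * (2 + PowerSeries.X) = (1 + PowerSeries.X) ^ n - 1)
    (μ : ℕ) (P : Polynomial ℤ_[p]) (u : PowerSeries ℤ_[p])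
    (hu : IsUnit u) (hPmon : P.Monic)
    (hPdist : ∀ i < P.natDegree, (p : ℤ_[p]) ∣ P.coeff i)
    (hdec : f = PowerSeries.C ((p : ℤ_[p]) ^ μ) * (P : PowerSeries ℤ_[p]) * u) :
    μ = 0 ∧ P.natDegree = p ^ t :=
  stmt2_general p hodd n t m hnm hm f hfdef μ P u hu hPmon hPdist hdec
end

section
/- Let a, b be coprime positive integers with b even (hence a odd). Define ε_k = (−1)^{⌊ka/b⌋} and the linking number ℓ(a/b) = Σ_{i=1}^{b/2} ε_{2i−1}. Then ℓ(a/(b+2a)) = ℓ(a/b) + 1. -/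
/-- The linking number `ℓ(a/b) = Σ_{i=1}^{b/2} (−1)^{⌊(2i−1)a/b⌋}` of the
2-bridge link `L_{a/b}` (here `2*i+1` for `i ∈ range (b/2)` runs over the
odd numbers `2i−1`, `1 ≤ i ≤ b/2`). -/
def linkingNumber (a b : ℕ) : ℤ :=
  ∑ i ∈ Finset.range (b / 2), (-1 : ℤ) ^ ((2 * i + 1) * a / b)


open Finset

/-- `hh a x` counts the `i : ℕ` with `(2i+1)a < x`. -/
def hh (a x : ℕ) : ℕ := (x + a - 1) / (2 * a)

lemma lt_iff_lt_hh {a : ℕ} (ha : 0 < a) (i x : ℕ) :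
    (2 * i + 1) * a < x ↔ i < hh a x := by
  unfold hh
  rw [show (i < (x + a - 1) / (2 * a)) ↔ (i + 1 ≤ (x + a - 1) / (2 * a)) from Iff.rfl,
    Nat.le_div_iff_mul_le (by omega)]
  have h : (i + 1) * (2 * a) = (2 * i + 1) * a + a := by ring
  omega

lemma hh_mono {a : ℕ} (ha : 0 < a) {x y : ℕ} (hxy : x ≤ y) : hh a x ≤ hh a y :=
  Nat.div_le_div_right (by omega)

lemma hh_add {a : ℕ} (ha : 0 < a) (x k : ℕ) : hh a (x + 2 * a * k) = hh a x + k := by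
  induction k with
  | zero => simp
  | succ n ih =>
    have h1 : x + 2 * a * (n + 1) = (x + 2 * a * n) + 2 * a := by ring
    rw [h1]
    unfold hh at *
    rw [show x + 2 * a * n + 2 * a + a - 1 = (x + 2 * a * n + a - 1) + 1 * (2 * a) by omega,
      Nat.add_mul_div_right _ _ (by omega : 0 < 2 * a)]
    omega

lemma div_eq_iff' {b : ℕ} (hb : 0 < b) (n m : ℕ) :
    n / b = m ↔ b * m ≤ n ∧ n < b * (m + 1) := by
  constructor
  · rintro rfl
    have h1 := Nat.div_add_mod n b
    have h2 := Nat.mod_lt n hb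
    have h3 : b * (n / b + 1) = b * (n / b) + b := by ring
    omega
  · rintro ⟨h1, h2⟩
    have hc1 : m * b = b * m := by ring
    have hc2 : (m + 1) * b = b * (m + 1) := by ring
    have := Nat.div_eq_of_lt_le (by omega : m * b ≤ n) (by omega : n < (m + 1) * b)
    omega

lemma linkingNumber_eq (a b : ℕ) (ha : 0 < a) (hb : 0 < b) (hbe : Even b) :
    linkingNumber a b =
      ∑ m ∈ Finset.range a, ((hh a (b * (m + 1)) : ℤ) - hh a (b * m)) * (-1) ^ m := by
  obtain ⟨c, hc⟩ := hbe
  have hmaps : ∀ i ∈ Finset.range (b / 2), (2 * i + 1) * a / b ∈ Finset.range a := by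
    intro i hi
    simp only [Finset.mem_range] at hi ⊢
    rw [Nat.div_lt_iff_lt_mul hb]
    have h2 : 2 * i + 1 < b := by omega
    calc (2 * i + 1) * a < b * a := by
          exact Nat.mul_lt_mul_of_lt_of_le h2 le_rfl ha
      _ = a * b := by ring
  rw [linkingNumber, ← Finset.sum_fiberwise_of_maps_to hmaps]
  refine Finset.sum_congr rfl ?_
  intro m hm
  simp only [Finset.mem_range] at hm
  have hfiber : (Finset.range (b / 2)).filter (fun i => (2 * i + 1) * a / b = m) =
      Finset.Ico (hh a (b * m)) (hh a (b * (m + 1))) := by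
    ext i
    simp only [Finset.mem_filter, Finset.mem_range, Finset.mem_Ico]
    rw [div_eq_iff' hb]
    rw [← lt_iff_lt_hh ha, ← not_lt (a := i), ← lt_iff_lt_hh ha, not_lt]
    constructor
    · rintro ⟨_, h1, h2⟩; exact ⟨h1, h2⟩
    · rintro ⟨h1, h2⟩
      refine ⟨?_, h1, h2⟩
      have hba : b * (m + 1) ≤ b * a := Nat.mul_le_mul_left b (by omega)
      have h3 : (2 * i + 1) * a < b * a := lt_of_lt_of_le h2 hba
      have h4 : 2 * i + 1 < b := lt_of_mul_lt_mul_right h3 (Nat.zero_le a)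
      omega
  rw [hfiber]
  have hle : hh a (b * m) ≤ hh a (b * (m + 1)) :=
    hh_mono ha (Nat.mul_le_mul_left b (by omega))
  calc ∑ i ∈ Finset.Ico (hh a (b * m)) (hh a (b * (m + 1))),
        (-1 : ℤ) ^ ((2 * i + 1) * a / b)
      = ∑ i ∈ Finset.Ico (hh a (b * m)) (hh a (b * (m + 1))), (-1 : ℤ) ^ m := by
        refine Finset.sum_congr rfl fun i hi => ?_
        simp only [Finset.mem_Ico] at hi
        congr 1
        rw [div_eq_iff' hb]
        refine ⟨?_, (lt_iff_lt_hh ha i (b * (m + 1))).mpr hi.2⟩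
        by_contra hlt
        push_neg at hlt
        have := (lt_iff_lt_hh ha i (b * m)).mp hlt
        omega
    _ = ((hh a (b * (m + 1)) : ℤ) - hh a (b * m)) * (-1) ^ m := by
        rw [Finset.sum_const, Nat.card_Ico, nsmul_eq_mul, Nat.cast_sub hle]

/-- `ℓ(a/(b+2a)) = ℓ(a/b) + 1`. -/
theorem stmt5 (a b : ℕ) (ha : 0 < a) (hb : 0 < b)
    (hcop : Nat.Coprime a b) (hbe : Even b) :
    linkingNumber a (b + 2 * a) = linkingNumber a b + 1 := by
  have hodd : Odd a := by
    rcases Nat.even_or_odd a with he | ho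
    · exfalso
      obtain ⟨c, hc⟩ := hbe
      have h2a : 2 ∣ a := he.two_dvd
      have h2b : 2 ∣ b := ⟨c, by omega⟩
      have := Nat.dvd_gcd h2a h2b
      rw [hcop] at this
      omega
    · exact ho
  have hNe : Even (b + 2 * a) := by
    obtain ⟨c, hc⟩ := hbe; exact ⟨c + a, by omega⟩
  rw [linkingNumber_eq a b ha hb hbe, linkingNumber_eq a (b + 2 * a) ha (by omega) hNe]
  have key : ∀ m ∈ Finset.range a,
      (((hh a ((b + 2 * a) * (m + 1)) : ℤ) - hh a ((b + 2 * a) * m)) * (-1) ^ m)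
        = ((hh a (b * (m + 1)) : ℤ) - hh a (b * m)) * (-1) ^ m + (-1) ^ m := by
    intro m hm
    have e1 : (b + 2 * a) * (m + 1) = b * (m + 1) + 2 * a * (m + 1) := by ring
    have e2 : (b + 2 * a) * m = b * m + 2 * a * m := by ring
    rw [e1, e2, hh_add ha, hh_add ha]
    push_cast
    ring
  rw [Finset.sum_congr rfl key, Finset.sum_add_distrib, neg_one_geom_sum,
    if_neg (Nat.not_even_iff_odd.mpr hodd)]
end

section
/- Fix an odd prime p. For a coprime pair (a,b) with b even, define ℓ(a/b) = Σ_{i=1}^{b/2} (−1)^{⌊(2i−1)a/b⌋}. Let N_{<x} = { (a,b) : gcd(a,b)=1, b even, 0 < a < 2b, max(a², b) < x } and S_{<x} = { (a,b) ∈ N_{<x} : p ∤ ℓ(a/b) }. Then #S_{<x} / #N_{<x} → 1 − 1/p as x → ∞. -/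
/-- `N_{<x}`: pairs `(a,b)` with `gcd(a,b) = 1`, `b` even, `0 < a < 2b`, and
height `max(a², b) < x`. -/
def NSet (x : ℝ) : Set (ℕ × ℕ) :=
  {ab | Nat.Coprime ab.1 ab.2 ∧ Even ab.2 ∧ 0 < ab.1 ∧ ab.1 < 2 * ab.2 ∧
    max ((ab.1 : ℝ) ^ 2) (ab.2 : ℝ) < x}

/-- `S_{<x}`: members of `N_{<x}` with `p ∤ ℓ(a/b)`. -/
def SSetP (p : ℕ) (x : ℝ) : Set (ℕ × ℕ) :=
  {ab ∈ NSet x | ¬ (p : ℤ) ∣ linkingNumber ab.1 ab.2}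

/-!
The `i`-th term of `ℓ(a/b)` has sign `(-1)^k` exactly when the odd multiple `(2i+1)a` lies in
`[kb, (k+1)b)`, so `ℓ(a/b)` is an alternating sum of counts of odd multiples of `a` in these
windows. Replacing `b` by `b + 2aj` puts exactly `j` more odd multiples into each of the `a`
windows; for odd `a` (forced by `gcd(a, b) = 1` with `b` even) the alternating sum of `a` ones
is `1`, whence `ℓ(a/(b + 2aj)) = ℓ(a/b) + j`.

Hence, writing `b = r + 2ak` with `r = b mod 2a`, the linking numbers along a residue class form a
run of consecutive integers, of which a proportion `1 - 1/p` avoids multiples of `p`, with error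
at most one per class. There are `O(x)` classes with `a² < x`, while `#N_{<x}` grows like
`x log x` (the harmonic sum over odd `a`), so the errors are negligible.
-/

open Finset Filter

def oddMultiplesBelow (a N : ℕ) : ℕ := (N + a - 1) / (2 * a)

lemma lt_oddMultiplesBelow_iff {a N i : ℕ} (ha : 0 < a) :
    i < oddMultiplesBelow a N ↔ (2 * i + 1) * a < N := by
  rw [oddMultiplesBelow, ← Nat.add_one_le_iff, Nat.le_div_iff_mul_le (by omega),
    show (i + 1) * (2 * a) = 2 * (i * a) + 2 * a by ring,
    show (2 * i + 1) * a = 2 * (i * a) + a by ring]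
  omega

lemma oddMultiplesBelow_mono {a : ℕ} {M N : ℕ} (h : M ≤ N) :
    oddMultiplesBelow a M ≤ oddMultiplesBelow a N :=
  Nat.div_le_div_right (by omega)

lemma oddMultiplesBelow_add_two_mul_mul {a : ℕ} (ha : 0 < a) (N j : ℕ) :
    oddMultiplesBelow a (N + 2 * a * j) = oddMultiplesBelow a N + j := by
  rw [oddMultiplesBelow, show N + 2 * a * j + a - 1 = N + a - 1 + j * (2 * a) by
    rw [mul_comm j]; omega, Nat.add_mul_div_right _ _ (by omega), oddMultiplesBelow]

lemma filter_div_eq_eq_Ico {a b k : ℕ} (ha : 0 < a) (hk : k < a) :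
    (range (b / 2)).filter (fun i => (2 * i + 1) * a / b = k) =
      Ico (oddMultiplesBelow a (k * b)) (oddMultiplesBelow a ((k + 1) * b)) := by
  ext i
  rcases Nat.eq_zero_or_pos b with rfl | hb
  · simp [oddMultiplesBelow]
  simp only [mem_filter, mem_range, mem_Ico, Nat.div_eq_iff hb, lt_oddMultiplesBelow_iff ha,
    ← not_lt]
  have hkb : (k + 1) * b ≤ a * b := Nat.mul_le_mul_right b hk
  have hb2 : (2 * i + 1) * a < a * b → i < b / 2 := by
    intro h
    have : 2 * i + 1 < b := by nlinarith
    omega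
  rw [show (k + 1) * b = k * b + b by ring] at hkb ⊢
  generalize (2 * i + 1) * a = n at hb2 ⊢
  generalize k * b = m at hkb ⊢
  constructor
  · rintro ⟨-, h1, h2⟩
    exact ⟨h1, by omega⟩
  · rintro ⟨h1, h2⟩
    exact ⟨hb2 (by omega), h1, by omega⟩

lemma linkingNumber_eq_sum_oddMultiplesBelow {a : ℕ} (ha : 0 < a) (b : ℕ) :
    linkingNumber a b = ∑ k ∈ range a, (-1 : ℤ) ^ k *
      ((oddMultiplesBelow a ((k + 1) * b) : ℤ) - oddMultiplesBelow a (k * b)) := by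
  rw [linkingNumber,
    ← sum_fiberwise_of_maps_to (g := fun i => (2 * i + 1) * a / b) (t := range a)]
  · refine sum_congr rfl fun k hk => ?_
    rw [sum_congr rfl fun i hi => by rw [(mem_filter.1 hi).2], sum_const, filter_div_eq_eq_Ico ha
      (mem_range.1 hk), Nat.card_Ico, nsmul_eq_mul, mul_comm,
      Nat.cast_sub (oddMultiplesBelow_mono (Nat.mul_le_mul_right _ k.le_succ))]
  · intro i hi
    have : 2 * i + 1 < b := by have := mem_range.1 hi; omega
    exact mem_range.2 ((Nat.div_lt_iff_lt_mul (by omega)).2 (by nlinarith))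

lemma linkingNumber_add_two_mul_mul {a : ℕ} (ha : Odd a) (b j : ℕ) :
    linkingNumber a (b + 2 * a * j) = linkingNumber a b + j := by
  have ha0 := ha.pos
  have hshift : ∀ k, (oddMultiplesBelow a (k * (b + 2 * a * j)) : ℤ) =
      oddMultiplesBelow a (k * b) + j * k := by
    intro k
    rw [show k * (b + 2 * a * j) = k * b + 2 * a * (j * k) by ring,
      oddMultiplesBelow_add_two_mul_mul ha0]
    push_cast; ring
  have halt : ∑ k ∈ range a, (-1 : ℤ) ^ k = 1 := by
    rw [neg_one_geom_sum, if_neg (Nat.not_even_iff_odd.2 ha)]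
  simp only [linkingNumber_eq_sum_oddMultiplesBelow ha0, hshift]
  conv_rhs => rw [show (j : ℤ) = ∑ k ∈ range a, (j : ℤ) * (-1) ^ k by
    rw [← mul_sum, halt, mul_one], ← sum_add_distrib]
  exact sum_congr rfl fun k _ => by push_cast; ring

lemma mul_ceil_div_mem_Ico {r : ℤ} (hr : 0 < r) (A : ℤ) :
    r * ⌈(A : ℚ) / r⌉ ∈ Set.Ico A (A + r) := by
  have hrq : (0 : ℚ) < r := by exact_mod_cast hr
  have h1 := Int.le_ceil ((A : ℚ) / r)
  have h2 := Int.ceil_lt_add_one ((A : ℚ) / r)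
  rw [div_le_iff₀ hrq] at h1
  rw [← sub_lt_iff_lt_add, lt_div_iff₀ hrq] at h2
  constructor
  · exact_mod_cast (by linarith : (A : ℚ) ≤ r * ⌈(A : ℚ) / r⌉)
  · exact_mod_cast (by linarith : (r : ℚ) * ⌈(A : ℚ) / r⌉ < A + r)

lemma abs_sub_mul_card_filter_dvd_lt {r : ℤ} (hr : 0 < r) {A B : ℤ} (hAB : A ≤ B) :
    |B - A - r * #{x ∈ Ico A B | r ∣ x}| < r := by
  have hceil : ⌈(A : ℚ) / r⌉ ≤ ⌈(B : ℚ) / r⌉ := Int.ceil_mono (by gcongr)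
  rw [Int.Ico_filter_dvd_card _ _ hr, max_eq_left (by omega)]
  obtain ⟨hA, hA'⟩ := mul_ceil_div_mem_Ico hr A
  obtain ⟨hB, hB'⟩ := mul_ceil_div_mem_Ico hr B
  rw [abs_lt]
  constructor <;> linarith

lemma abs_mul_card_filter_not_dvd_sub_le {p : ℕ} (hp : 0 < p) (c : ℤ) (m M : ℕ) :
    |(p : ℤ) * #{k ∈ Ico m M | ¬ (p : ℤ) ∣ c + (k : ℕ)} - (p - 1) * #(Ico m M)|
      ≤ p := by
  rcases lt_or_ge M m with hMm | hmM
  · simp [Ico_eq_empty_of_le hMm.le]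
  have htransport : #{k ∈ Ico m M | (p : ℤ) ∣ c + (k : ℕ)} =
      #{x ∈ Ico (c + m) (c + M) | (p : ℤ) ∣ x} := by
    refine card_nbij' (fun k => c + k) (fun x => (x - c).toNat) ?_ ?_ ?_ ?_
    · intro k hk
      simp only [coe_filter, Set.mem_ofPred_eq, mem_Ico] at hk ⊢
      exact ⟨⟨by omega, by omega⟩, hk.2⟩
    · intro x hx
      simp only [coe_filter, Set.mem_ofPred_eq, mem_Ico] at hx ⊢
      rw [Int.toNat_of_nonneg (by omega), add_sub_cancel]
      exact ⟨⟨by omega, by omega⟩, hx.2⟩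
    · intro k _
      simp
    · intro x hx
      simp only [coe_filter, Set.mem_ofPred_eq, mem_Ico] at hx
      simp only
      omega
  have hsplit : (#{k ∈ Ico m M | ¬ (p : ℤ) ∣ c + (k : ℕ)} : ℤ) =
      (M - m) - #{k ∈ Ico m M | (p : ℤ) ∣ c + (k : ℕ)} := by
    have := card_filter_add_card_filter_not (s := Ico m M) (fun k : ℕ => (p : ℤ) ∣ c + k)
    rw [Nat.card_Ico] at this
    omega
  have hdvd := abs_sub_mul_card_filter_dvd_lt (r := p) (by omega) (A := c + m) (B := c + M)
    (by omega)
  rw [← htransport] at hdvd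
  rw [Nat.card_Ico, hsplit, Nat.cast_sub hmM]
  refine (le_of_eq ?_).trans hdvd.le
  congr 1
  ring

open Classical in
noncomputable def NFinset (x : ℝ) : Finset (ℕ × ℕ) :=
  (range ⌈x⌉₊ ×ˢ range ⌈x⌉₊).filter (· ∈ NSet x)

lemma mem_NFinset {x : ℝ} {ab : ℕ × ℕ} : ab ∈ NFinset x ↔ ab ∈ NSet x := by
  simp only [NFinset, mem_filter, mem_product, mem_range, Nat.lt_ceil, and_iff_right_iff_imp]
  rintro ⟨-, -, ha, -, hx⟩
  rw [max_lt_iff] at hx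
  have : (ab.1 : ℝ) ≤ (ab.1 : ℝ) ^ 2 := by
    nlinarith [(Nat.one_le_cast (α := ℝ)).2 ha]
  exact ⟨by linarith, hx.2⟩

lemma natCard_NSet (x : ℝ) : Nat.card (NSet x) = #(NFinset x) := by
  rw [← Nat.card_eq_finsetCard]
  congr
  ext; exact mem_NFinset.symm

lemma natCard_SSetP (p : ℕ) (x : ℝ) :
    Nat.card (SSetP p x) = #{ab ∈ NFinset x | ¬ (p : ℤ) ∣ linkingNumber ab.1 ab.2} := by
  rw [← Nat.card_eq_finsetCard]
  congr
  ext; simp [SSetP, mem_NFinset]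

lemma mem_NSet_iff_of_mod_eq {x : ℝ} {a b b' : ℕ} (hab : (a, b) ∈ NSet x)
    (hb' : b' % (2 * a) = b % (2 * a)) :
    (a, b') ∈ NSet x ↔ a < 2 * b' ∧ (b' : ℝ) < x := by
  obtain ⟨hcop, hev, ha, -, hx⟩ := hab
  have hmod : ∀ d, d ∣ 2 * a → b' % d = b % d := fun d hd => by
    rw [← Nat.mod_mod_of_dvd b' hd, hb', Nat.mod_mod_of_dvd b hd]
  have hcop' : Nat.Coprime a b' := by
    rw [Nat.Coprime, Nat.gcd_rec, hmod a (dvd_mul_left a 2), ← Nat.gcd_rec]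
    exact hcop
  have hev' : Even b' := by
    rw [Nat.even_iff, hmod 2 (dvd_mul_right 2 a), ← Nat.even_iff]
    exact hev
  simp only [NSet, Set.mem_ofPred_eq, max_lt_iff]
  exact ⟨fun h => ⟨h.2.2.2.1, h.2.2.2.2.2⟩,
    fun h => ⟨hcop', hev', ha, h.1, (max_lt_iff.1 hx).1, h.2⟩⟩

def residueClass (ab : ℕ × ℕ) : ℕ × ℕ := (ab.1, ab.2 % (2 * ab.1))

def classStart (a r : ℕ) : ℕ := if a < 2 * r then 0 else 1

noncomputable def classEnd (x : ℝ) (a r : ℕ) : ℕ := ⌈(x - r) / (2 * a)⌉₊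

lemma classStart_le_iff {a r k : ℕ} (hra : r < 2 * a) :
    classStart a r ≤ k ↔ a < 2 * (r + 2 * a * k) := by
  rcases Nat.eq_zero_or_pos k with rfl | hk
  · simp [classStart]
  · have : 2 * a ≤ 2 * a * k := Nat.le_mul_of_pos_right _ hk
    unfold classStart
    split_ifs <;> omega

lemma lt_classEnd_iff {x : ℝ} {a r k : ℕ} (ha : 0 < a) :
    k < classEnd x a r ↔ ((r + 2 * a * k : ℕ) : ℝ) < x := by
  rw [classEnd, Nat.lt_ceil, lt_div_iff₀ (by positivity)]
  push_cast
  constructor <;> intro h <;> linarith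

lemma mem_NSet_add_iff {x : ℝ} {a b : ℕ} (hab : (a, b) ∈ NSet x) (k : ℕ) :
    (a, b % (2 * a) + 2 * a * k) ∈ NSet x ↔
      k ∈ Ico (classStart a (b % (2 * a))) (classEnd x a (b % (2 * a))) := by
  have ha : 0 < a := hab.2.2.1
  rw [mem_NSet_iff_of_mod_eq hab (by simp), mem_Ico,
    classStart_le_iff (Nat.mod_lt _ (by omega)), lt_classEnd_iff ha]

lemma filter_residueClass_eq_image {x : ℝ} {a b : ℕ} (hab : (a, b) ∈ NSet x) :
    {ab ∈ NFinset x | residueClass ab = residueClass (a, b)} =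
      (Ico (classStart a (b % (2 * a))) (classEnd x a (b % (2 * a)))).image
        (fun k => (a, b % (2 * a) + 2 * a * k)) := by
  ext ⟨a', b'⟩
  simp only [mem_filter, mem_NFinset, residueClass, Prod.mk.injEq, mem_image]
  constructor
  · rintro ⟨hmem, rfl, hmod⟩
    refine ⟨b' / (2 * a'), (mem_NSet_add_iff hab _).1 ?_, rfl, ?_⟩ <;>
      rw [← hmod, Nat.mod_add_div]
    exact hmem
  · rintro ⟨k, hk, rfl, rfl⟩
    refine ⟨(mem_NSet_add_iff hab k).2 hk, rfl, ?_⟩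
    simp

lemma abs_mul_card_fiber_sub_le {p : ℕ} (hp : 0 < p) {x : ℝ} {a b : ℕ}
    (hab : (a, b) ∈ NSet x) :
    |(p : ℤ) * #{ab ∈ {ab ∈ NFinset x | residueClass ab = residueClass (a, b)} |
        ¬ (p : ℤ) ∣ linkingNumber ab.1 ab.2} -
      (p - 1) * #{ab ∈ NFinset x | residueClass ab = residueClass (a, b)}| ≤ p := by
  have ha : Odd a := (Nat.Coprime.coprime_dvd_right hab.2.1.two_dvd hab.1).odd_of_right
  have hinj : Function.Injective (fun k => (a, b % (2 * a) + 2 * a * k)) := fun k k' h => by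
    simp only [Prod.mk.injEq, add_right_inj] at h
    exact Nat.eq_of_mul_eq_mul_left (by linarith [ha.pos]) h.2
  rw [filter_residueClass_eq_image hab, filter_image, card_image_of_injective _ hinj,
    card_image_of_injective _ hinj]
  simp only [linkingNumber_add_two_mul_mul ha]
  exact abs_mul_card_filter_not_dvd_sub_le hp _ _ _

noncomputable def residueClasses (x : ℝ) : Finset (ℕ × ℕ) := (NFinset x).image residueClass

lemma abs_mul_card_sub_le {p : ℕ} (hp : 0 < p) (x : ℝ) :
    |(p : ℤ) * #{ab ∈ NFinset x | ¬ (p : ℤ) ∣ linkingNumber ab.1 ab.2} -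
        (p - 1) * #(NFinset x)| ≤ p * #(residueClasses x) := by
  have hmaps : Set.MapsTo residueClass (NFinset x) (residueClasses x) :=
    fun ab hab => mem_image_of_mem _ hab
  rw [card_eq_sum_card_fiberwise hmaps,
    card_eq_sum_card_fiberwise (hmaps.mono_left (coe_subset.2 (filter_subset _ _))),
    card_eq_sum_ones, Nat.cast_sum, Nat.cast_sum, Nat.cast_sum, mul_sum, mul_sum, mul_sum,
    ← sum_sub_distrib]
  refine (abs_sum_le_sum_abs _ _).trans (sum_le_sum fun q hq => ?_)
  obtain ⟨⟨a, b⟩, hab, rfl⟩ := mem_image.1 hq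
  rw [filter_comm, Nat.cast_one, mul_one]
  exact abs_mul_card_fiber_sub_le hp (mem_NFinset.1 hab)

lemma card_residueClasses_le {x : ℝ} (hx : 1 ≤ x) : (#(residueClasses x) : ℝ) ≤ 4 * x := by
  set s := ⌊√x⌋₊
  have hsub : residueClasses x ⊆ range (s + 1) ×ˢ range (2 * s) := by
    intro q hq
    obtain ⟨⟨a, b⟩, hab, rfl⟩ := mem_image.1 hq
    obtain ⟨-, -, ha, -, hmax⟩ := mem_NFinset.1 hab
    have has : a ≤ s := Nat.le_floor ((Real.le_sqrt (by positivity) (by linarith)).2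
      (lt_of_le_of_lt (le_max_left _ _) hmax).le)
    have : b % (2 * a) < 2 * a := Nat.mod_lt _ (by omega)
    simp only [residueClass, mem_product, mem_range]
    omega
  have hs : (s : ℝ) ≤ √x := Nat.floor_le (Real.sqrt_nonneg x)
  have hsqrt : √x ≤ x := by
    rw [Real.sqrt_le_left (by linarith)]
    nlinarith
  have hsq := Real.sq_sqrt (by linarith : (0 : ℝ) ≤ x)
  have hcard : #(residueClasses x) ≤ (s + 1) * (2 * s) := by simpa using card_le_card hsub
  calc (#(residueClasses x) : ℝ) ≤ (s + 1) * (2 * s) := by exact_mod_cast hcard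
    _ ≤ (√x + 1) * (2 * √x) := by gcongr
    _ ≤ 4 * x := by nlinarith

lemma sum_le_card_NFinset {x : ℝ} {m : ℕ} (hx : ((2 * m + 1 : ℕ) : ℝ) ^ 2 < x) :
    ∑ t ∈ range m, ((x - 2) / (2 * (2 * t + 3)) - 1) ≤ (#(NFinset x) : ℝ) := by
  have hfam : ∑ t ∈ range m, ((x - 2) / (2 * (2 * t + 3)) - 1) ≤
      #((range m).sigma fun t => Ico 1 (classEnd x (2 * t + 3) 2)) := by
    rw [card_sigma, Nat.cast_sum]
    refine sum_le_sum fun t _ => ?_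
    set E := classEnd x (2 * t + 3) 2 with hE_def
    have hE : (x - 2) / (2 * (2 * t + 3)) ≤ E := by
      rw [hE_def, classEnd]; push_cast; exact Nat.le_ceil _
    have hsub : (E : ℝ) ≤ ((E - 1 : ℕ) : ℝ) + 1 := by
      exact_mod_cast (by omega : E ≤ E - 1 + 1)
    rw [Nat.card_Ico]
    linarith
  refine hfam.trans (Nat.cast_le.2 (card_le_card_of_injOn
    (fun tk => (2 * tk.1 + 3, 2 + 2 * (2 * tk.1 + 3) * tk.2)) ?_ ?_))
  · rintro ⟨t, k⟩ htk
    simp only [coe_sigma, Set.mem_sigma_iff, coe_range, Set.mem_Iio, coe_Ico, Set.mem_Ico] at htk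
    obtain ⟨ht, hk1, hk2⟩ := htk
    rw [lt_classEnd_iff (by omega)] at hk2
    have hodd : Odd (2 * t + 3) := ⟨t + 1, by ring⟩
    have hlt : 2 * t + 3 ≤ 2 * m + 1 := by omega
    have hsq : ((2 * t + 3 : ℕ) : ℝ) ^ 2 < x := lt_of_le_of_lt (by gcongr) hx
    dsimp only
    refine mem_NFinset.2 ⟨?_, ⟨1 + (2 * t + 3) * k, by ring⟩, by omega, by nlinarith,
      max_lt hsq hk2⟩
    rw [show 2 + 2 * (2 * t + 3) * k = 2 + (2 * t + 3) * (2 * k) by ring,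
      Nat.coprime_add_mul_left_right]
    exact Nat.coprime_two_right.2 hodd
  · rintro ⟨t, k⟩ - ⟨t', k'⟩ - h
    simp only [Prod.mk.injEq] at h
    obtain rfl : t = t' := by omega
    rw [Nat.eq_of_mul_eq_mul_left (by omega : 0 < 2 * (2 * t + 3))
      (by omega : 2 * (2 * t + 3) * k = 2 * (2 * t + 3) * k')]

lemma tendsto_sum_inv_odd_atTop :
    Tendsto (fun m : ℕ => ∑ t ∈ range m, 1 / (2 * (2 * (t : ℝ) + 3))) atTop
      atTop := by
  refine tendsto_atTop_mono (fun m => ?_)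
    (Real.tendsto_sum_range_one_div_nat_succ_atTop.const_mul_atTop
      (by norm_num : (0 : ℝ) < 1 / 6))
  rw [mul_sum]
  refine sum_le_sum fun t _ => ?_
  rw [div_mul_div_comm, div_le_div_iff₀ (by positivity) (by positivity)]
  nlinarith [(t.cast_nonneg : (0 : ℝ) ≤ t)]

lemma eventually_le_card_NFinset_div (m : ℕ) :
    ∀ᶠ x in atTop,
      (∑ t ∈ range m, 1 / (2 * (2 * (t : ℝ) + 3))) / 2 - 1 ≤ #(NFinset x) / x := by
  filter_upwards [eventually_gt_atTop (((2 * m + 1 : ℕ) : ℝ) ^ 2),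
    eventually_ge_atTop 4, eventually_ge_atTop (m : ℝ)] with x hsq hx4 hxm
  have hsum := sum_le_card_NFinset hsq
  set h := ∑ t ∈ range m, 1 / (2 * (2 * (t : ℝ) + 3))
  have hh : 0 ≤ h := sum_nonneg fun t _ => by positivity
  have hsum' : ∑ t ∈ range m, ((x - 2) / (2 * (2 * t + 3)) - 1) = (x - 2) * h - m := by
    rw [sum_sub_distrib, mul_sum, sum_const, card_range, nsmul_one]
    congr 1
    exact sum_congr rfl fun t _ => by rw [mul_one_div]
  rw [le_div_iff₀ (by linarith)]
  nlinarith

lemma tendsto_card_NFinset_div_atTop :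
    Tendsto (fun x => (#(NFinset x) : ℝ) / x) atTop atTop := by
  refine tendsto_atTop.2 fun C => ?_
  obtain ⟨m, hm⟩ := (tendsto_atTop.1 tendsto_sum_inv_odd_atTop (2 * C + 2)).exists
  filter_upwards [eventually_le_card_NFinset_div m] with x hx
  linarith

lemma abs_card_div_card_sub_le {p : ℕ} (hp : 0 < p) {x : ℝ} (hx : 1 ≤ x)
    (hN : (0 : ℝ) < #(NFinset x)) :
    |(#{ab ∈ NFinset x | ¬ (p : ℤ) ∣ linkingNumber ab.1 ab.2} : ℝ) / #(NFinset x) -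
        (1 - 1 / p)|
      ≤ 4 * (x / #(NFinset x)) := by
  have hbound : |(p : ℝ) * #{ab ∈ NFinset x | ¬ (p : ℤ) ∣ linkingNumber ab.1 ab.2} -
      (p - 1) * #(NFinset x)| ≤ p * #(residueClasses x) := by
    exact_mod_cast abs_mul_card_sub_le hp x
  have hpR : (0 : ℝ) < p := by exact_mod_cast hp
  set S : ℝ := ((#{ab ∈ NFinset x | ¬ (p : ℤ) ∣ linkingNumber ab.1 ab.2} : ℕ) : ℝ)
  set N : ℝ := ((#(NFinset x) : ℕ) : ℝ)
  have hsplit : S / N - (1 - 1 / p) = (p * S - (p - 1) * N) / p / N := by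
    field_simp
  rw [hsplit, abs_div, abs_div, abs_of_pos hpR, abs_of_pos hN, div_le_iff₀ hN]
  calc |p * S - (p - 1) * N| / p ≤ #(residueClasses x) := by rw [div_le_iff₀ hpR]; linarith
    _ ≤ 4 * x := card_residueClasses_le hx
    _ = 4 * (x / N) * N := by field_simp

theorem stmt9_general (p : ℕ) [Fact p.Prime] :
    Filter.Tendsto
      (fun x : ℝ => (Nat.card ↥(SSetP p x) : ℝ) / (Nat.card ↥(NSet x) : ℝ))
      Filter.atTop (nhds (1 - 1 / (p : ℝ))) := by
  have hp : 0 < p := (Fact.out : p.Prime).pos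
  simp only [natCard_SSetP, natCard_NSet]
  have herr : Tendsto (fun x => 4 * (x / #(NFinset x))) atTop (nhds 0) := by
    simpa [inv_div] using tendsto_card_NFinset_div_atTop.inv_tendsto_atTop.const_mul 4
  refine tendsto_sub_nhds_zero_iff.1 (squeeze_zero_norm' ?_ herr)
  filter_upwards [tendsto_card_NFinset_div_atTop.eventually_gt_atTop 0,
    eventually_ge_atTop 1] with x hN hx
  exact abs_card_div_card_sub_le hp hx ((div_pos_iff_of_pos_right (by linarith)).1 hN)

/-- `#S_{<x} / #N_{<x} → 1 − 1/p` as `x → ∞`. -/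
theorem stmt9 (p : ℕ) [Fact p.Prime] (hodd : Odd p) :
    Filter.Tendsto
      (fun x : ℝ => (Nat.card ↥(SSetP p x) : ℝ) / (Nat.card ↥(NSet x) : ℝ))
      Filter.atTop (nhds (1 - 1 / (p : ℝ))) :=
  stmt9_general p
end

section
/- Let p be a prime and let f(X) ∈ Z_p[[X]] be nonzero with μ-invariant μ and λ-invariant λ (via Weierstrass preparation f = p^μ P u). Then for all sufficiently large n, the p-adic valuation of the product Π_{ζ^{p^n}=1, ζ≠1} f(ζ − 1) (taken over nontrivial p^n-th roots of unity ζ in an algebraic closure of Q_p, assuming f(ζ−1) ≠ 0 for all such ζ) equals p^n μ + n λ + ν for some constant integer ν independent of n. -/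
/-
A nontrivial `p`-power root of unity satisfies `‖ζ - 1‖ < 1`, and there the unit `u` evaluates to
an element of norm one; hence `‖F ζ‖ = p^(-μ) ‖P(ζ - 1)‖`, and the product is `p^(-μ (p^n - 1))`
times `∏_ζ ‖P(ζ - 1)‖ = ∏_α ‖Φₙ(1 + α)‖`, where `α` runs over the roots of `P` (all of norm `< 1`
since `P` is distinguished) and `Φₙ = 1 + X + ⋯ + X^(p^n - 1)`. By the binomial theorem,
`‖(1 + β)^p - 1‖ = ‖p‖ ‖β‖` as soon as `‖β‖^(p-1) < ‖p‖`; as `(1 + α)^(p^n) → 1`, each factor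
`‖Φₙ(1 + α)‖ = ‖(1 + α)^(p^n) - 1‖ / ‖α‖` is eventually divided by `p` at each step, which
produces the term `n λ`. The constant `ν` is an integer because `∏_ζ P(ζ - 1)` is the resultant
of `Φₙ` and `P(X - 1)`, a nonzero element of `ℤ_p`.
-/

open Polynomial Filter Topology

lemma one_add_pow_sub_one_eq {R : Type*} [CommRing R] {p : ℕ} (hp : 2 ≤ p) (β : R) :
    (1 + β) ^ p - 1 = p * β + β ^ p + ∑ k ∈ Finset.Ico 2 p, (p.choose k : R) * β ^ k := by
  rw [add_comm 1 β, add_pow, Finset.sum_range_succ, ← Finset.sum_range_add_sum_Ico _ hp]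
  simp only [Finset.sum_range_succ, Finset.sum_range_zero, one_pow, mul_one, Nat.choose_self,
    Nat.choose_zero_right, Nat.choose_one_right, pow_zero, pow_one, Nat.cast_one, zero_add]
  rw [Finset.sum_congr rfl fun k _ => mul_comm (β ^ k) _]
  ring

section OneAddPow

variable {L : Type*} [NormedField L] [IsUltrametricDist L] {p : ℕ} [hp : Fact p.Prime]

lemma norm_natCast_choose_le {k : ℕ} (hk : k ≠ 0) (hkp : k < p) :
    ‖(p.choose k : L)‖ ≤ ‖(p : L)‖ := by
  obtain ⟨m, hm⟩ := hp.out.dvd_choose_self hk hkp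
  rw [hm, Nat.cast_mul, norm_mul]
  exact mul_le_of_le_one_right (norm_nonneg _) (IsUltrametricDist.norm_natCast_le_one L m)

lemma norm_one_add_pow_sub_one_sub_le {β : L} (hβ : ‖β‖ ≤ 1) :
    ‖(1 + β) ^ p - 1 - (p * β + β ^ p)‖ ≤ ‖(p : L)‖ * ‖β‖ ^ 2 := by
  rw [one_add_pow_sub_one_eq hp.out.two_le, add_sub_cancel_left]
  refine IsUltrametricDist.norm_sum_le_of_forall_le_of_nonneg (by positivity) fun k hk => ?_
  obtain ⟨hk2, hkp⟩ := Finset.mem_Ico.mp hk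
  rw [norm_mul, norm_pow]
  exact mul_le_mul (norm_natCast_choose_le (by omega) hkp)
    (pow_le_pow_of_le_one (norm_nonneg _) hβ hk2) (by positivity) (norm_nonneg _)

lemma norm_one_add_pow_sub_one_le {β : L} (hβ : ‖β‖ ≤ 1) :
    ‖(1 + β) ^ p - 1‖ ≤ ‖β‖ * max ‖(p : L)‖ (‖β‖ ^ (p - 1)) := by
  have hR := norm_one_add_pow_sub_one_sub_le (p := p) hβ
  have hβp : ‖β‖ ^ p = ‖β‖ * ‖β‖ ^ (p - 1) := by
    rw [← pow_succ', Nat.sub_add_cancel hp.out.one_le]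
  calc ‖(1 + β) ^ p - 1‖
      = ‖(p * β + β ^ p) + ((1 + β) ^ p - 1 - (p * β + β ^ p))‖ := by rw [add_sub_cancel]
    _ ≤ max (max ‖(p : L) * β‖ ‖β ^ p‖) ‖(1 + β) ^ p - 1 - (p * β + β ^ p)‖ :=
        (IsUltrametricDist.norm_add_le_max _ _).trans
          (max_le_max_right _ (IsUltrametricDist.norm_add_le_max _ _))
    _ ≤ ‖β‖ * max ‖(p : L)‖ (‖β‖ ^ (p - 1)) := by
        refine max_le (max_le ?_ ?_) (hR.trans ?_)
        · rw [norm_mul, mul_comm]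
          exact mul_le_mul_of_nonneg_left (le_max_left _ _) (norm_nonneg _)
        · rw [norm_pow, hβp]
          exact mul_le_mul_of_nonneg_left (le_max_right _ _) (norm_nonneg _)
        · rw [sq, ← mul_assoc, mul_comm]
          exact mul_le_mul_of_nonneg_left
            ((mul_le_of_le_one_right (norm_nonneg _) hβ).trans (le_max_left _ _)) (norm_nonneg _)

lemma norm_one_add_pow_sub_one_of_pow_lt {β : L} (hβ : ‖β‖ ^ (p - 1) < ‖(p : L)‖) :
    ‖(1 + β) ^ p - 1‖ = ‖(p : L)‖ * ‖β‖ := by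
  rcases eq_or_ne β 0 with rfl | hβ0
  · simp
  have hβpos : 0 < ‖β‖ := norm_pos_iff.mpr hβ0
  have hp1 : p - 1 ≠ 0 := by have := hp.out.two_le; omega
  have hβ1 : ‖β‖ < 1 := (pow_lt_one_iff_of_nonneg (norm_nonneg _) hp1).mp
    (hβ.trans_le (IsUltrametricDist.norm_natCast_le_one L p))
  have hR := norm_one_add_pow_sub_one_sub_le (p := p) hβ1.le
  have hp0 : 0 < ‖(p : L)‖ := (pow_nonneg (norm_nonneg β) _).trans_lt hβ
  have hrest : ‖β ^ p + ((1 + β) ^ p - 1 - (p * β + β ^ p))‖ < ‖(p : L) * β‖ := by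
    rw [norm_mul]
    refine (IsUltrametricDist.norm_add_le_max _ _).trans_lt (max_lt ?_ (hR.trans_lt ?_))
    · rw [norm_pow, ← pow_sub_one_mul hp.out.ne_zero]
      exact mul_lt_mul_of_pos_right hβ hβpos
    · exact mul_lt_mul_of_pos_left (by nlinarith) hp0
  rw [show (1 + β) ^ p - 1 = p * β + (β ^ p + ((1 + β) ^ p - 1 - (p * β + β ^ p))) by ring,
    IsUltrametricDist.norm_add_eq_max_of_norm_ne_norm hrest.ne', max_eq_left hrest.le, norm_mul]

lemma norm_one_add_pow_sub_one_of_norm_eq_one (hp1 : ‖(p : L)‖ < 1) {β : L} (hβ : ‖β‖ = 1) :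
    ‖(1 + β) ^ p - 1‖ = 1 := by
  have hR := norm_one_add_pow_sub_one_sub_le (p := p) hβ.le
  rw [hβ, one_pow, mul_one] at hR
  have hrest : ‖(p : L) * β + ((1 + β) ^ p - 1 - (p * β + β ^ p))‖ < ‖β ^ p‖ := by
    rw [norm_pow, hβ, one_pow]
    refine (IsUltrametricDist.norm_add_le_max _ _).trans_lt (max_lt ?_ (hR.trans_lt hp1))
    rwa [norm_mul, hβ, mul_one]
  rw [show (1 + β) ^ p - 1 = β ^ p + (p * β + ((1 + β) ^ p - 1 - (p * β + β ^ p))) by ring,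
    IsUltrametricDist.norm_add_eq_max_of_norm_ne_norm hrest.ne', max_eq_left hrest.le, norm_pow,
    hβ, one_pow]

lemma norm_sub_one_lt_one_of_pow_eq_one (hp1 : ‖(p : L)‖ < 1) {ζ : L} {n : ℕ}
    (hζ : ζ ^ p ^ n = 1) : ‖ζ - 1‖ < 1 := by
  have hζn : ‖ζ‖ = 1 := by
    have h := congrArg norm hζ
    rwa [norm_pow, norm_one, pow_eq_one_iff_of_nonneg (norm_nonneg _)
      (pow_ne_zero _ hp.out.ne_zero)] at h
  have hle : ‖ζ - 1‖ ≤ 1 := by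
    simpa [hζn, ← sub_eq_add_neg] using IsUltrametricDist.norm_add_le_max ζ (-1)
  refine hle.lt_of_ne fun h => ?_
  have key : ∀ k, ‖ζ ^ p ^ k - 1‖ = 1 := by
    intro k
    induction k with
    | zero => simpa using h
    | succ k ih =>
      have := norm_one_add_pow_sub_one_of_norm_eq_one hp1 ih
      rwa [add_sub_cancel, ← pow_mul, ← pow_succ] at this
  simpa [hζ] using key n

lemma tendsto_norm_one_add_pow_prime_pow_sub_one (hp1 : ‖(p : L)‖ < 1) {α : L} (hα : ‖α‖ < 1) :
    Tendsto (fun n => ‖(1 + α) ^ p ^ n - 1‖) atTop (𝓝 0) := by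
  set q := max ‖(p : L)‖ (‖α‖ ^ (p - 1))
  have hq : q < 1 := max_lt hp1
    (pow_lt_one₀ (norm_nonneg _) hα (by have := hp.out.two_le; omega))
  have hbound : ∀ n, ‖(1 + α) ^ p ^ n - 1‖ ≤ ‖α‖ * q ^ n := by
    intro n
    induction n with
    | zero => simp
    | succ n ih =>
      set β := (1 + α) ^ p ^ n - 1
      have hβα : ‖β‖ ≤ ‖α‖ := ih.trans
        (mul_le_of_le_one_right (norm_nonneg _) (pow_le_one₀ (by positivity) hq.le))
      have h := norm_one_add_pow_sub_one_le (p := p) (hβα.trans hα.le)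
      rw [add_sub_cancel, ← pow_mul, ← pow_succ] at h
      calc _ ≤ ‖β‖ * max ‖(p : L)‖ (‖β‖ ^ (p - 1)) := h
        _ ≤ (‖α‖ * q ^ n) * q := mul_le_mul ih
            (max_le_max le_rfl (pow_le_pow_left₀ (norm_nonneg _) hβα _)) (by positivity)
            (by positivity)
        _ = ‖α‖ * q ^ (n + 1) := by ring
  refine squeeze_zero (fun n => norm_nonneg _) hbound ?_
  simpa using (tendsto_pow_atTop_nhds_zero_of_lt_one (by positivity) hq).const_mul ‖α‖

lemma eventually_norm_one_add_pow_prime_pow_succ_sub_one (hp0 : (p : L) ≠ 0)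
    (hp1 : ‖(p : L)‖ < 1) {α : L} (hα : ‖α‖ < 1) :
    ∀ᶠ n in atTop, ‖(1 + α) ^ p ^ (n + 1) - 1‖ = ‖(p : L)‖ * ‖(1 + α) ^ p ^ n - 1‖ := by
  have hsmall : ∀ᶠ n in atTop, ‖(1 + α) ^ p ^ n - 1‖ ^ (p - 1) < ‖(p : L)‖ := by
    have h := (tendsto_norm_one_add_pow_prime_pow_sub_one hp1 hα).pow (p - 1)
    rw [zero_pow (by have := hp.out.two_le; omega)] at h
    exact h.eventually_lt_const (norm_pos_iff.mpr hp0)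
  filter_upwards [hsmall] with n hn
  rw [← norm_one_add_pow_sub_one_of_pow_lt hn, add_sub_cancel, ← pow_mul, ← pow_succ]

lemma eventually_norm_geom_sum_prime_pow_succ (hp0 : (p : L) ≠ 0) (hp1 : ‖(p : L)‖ < 1)
    {α : L} (hα : ‖α‖ < 1) :
    ∀ᶠ n in atTop, ‖∑ i ∈ Finset.range (p ^ (n + 1)), (1 + α) ^ i‖ =
      ‖(p : L)‖ * ‖∑ i ∈ Finset.range (p ^ n), (1 + α) ^ i‖ := by
  rcases eq_or_ne α 0 with rfl | hα0
  · refine Eventually.of_forall fun n => ?_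
    simp [pow_succ, mul_comm]
  have hgeom : ∀ m, ‖∑ i ∈ Finset.range m, (1 + α) ^ i‖ = ‖(1 + α) ^ m - 1‖ / ‖α‖ := by
    intro m
    have h := geom_sum_mul (1 + α) m
    rw [add_sub_cancel_left] at h
    rw [eq_div_iff (norm_ne_zero_iff.mpr hα0), ← norm_mul, h]
  filter_upwards [eventually_norm_one_add_pow_prime_pow_succ_sub_one hp0 hp1 hα] with n hn
  rw [hgeom, hgeom, hn, mul_div_assoc]

end OneAddPow

lemma Multiset.eventually_prod_map_succ {ι M : Type*} [CommMonoid M] (s : Multiset ι)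
    {g : ι → ℕ → M} {c : M} (h : ∀ a ∈ s, ∀ᶠ n in atTop, g a (n + 1) = c * g a n) :
    ∀ᶠ n in atTop, (s.map (g · (n + 1))).prod = c ^ card s * (s.map (g · n)).prod := by
  classical
  have hall := (eventually_all_finset s.toFinset).2 fun a ha => h a (mem_toFinset.mp ha)
  filter_upwards [hall] with n hn
  rw [map_congr rfl fun a ha => hn a (mem_toFinset.mpr ha), prod_map_mul, map_const',
    prod_replicate]

lemma exists_forall_add_eq_pow_mul {M : Type*} [Monoid M] {g : ℕ → M} {c : M}
    (h : ∀ᶠ n in atTop, g (n + 1) = c * g n) : ∃ N, ∀ k, g (N + k) = c ^ k * g N := by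
  obtain ⟨N, hN⟩ := eventually_atTop.mp h
  refine ⟨N, fun k => ?_⟩
  induction k with
  | zero => simp
  | succ k ih => rw [← add_assoc, hN _ (by omega), ih, pow_succ', mul_assoc]

lemma X_pow_sub_C_one_eq_mul_geom_sum {K : Type*} [CommRing K] (m : ℕ) :
    X ^ m - C 1 = (X - C 1) * ∑ i ∈ Finset.range m, (X : K[X]) ^ i := by
  simpa [mul_comm] using (mul_geom_sum (X : K[X]) m).symm

lemma nthRootsFinset_erase_one_val {K : Type*} [Field K] [DecidableEq K] {m : ℕ}
    (hm : (m : K) ≠ 0) :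
    ((nthRootsFinset m (1 : K)).erase 1).val = (∑ i ∈ Finset.range m, (X : K[X]) ^ i).roots := by
  have hm0 : m ≠ 0 := by rintro rfl; simp at hm
  have hmul := X_pow_sub_C_one_eq_mul_geom_sum (K := K) m
  have hnodup : (nthRoots m (1 : K)).Nodup :=
    nodup_roots (separable_X_pow_sub_C 1 hm one_ne_zero)
  rw [Finset.erase_val, nthRootsFinset_def, Multiset.toFinset_val, hnodup.dedup, nthRoots, hmul,
    roots_mul (hmul ▸ X_pow_sub_C_ne_zero (Nat.pos_of_ne_zero hm0) 1), roots_X_sub_C,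
    Multiset.singleton_add, Multiset.erase_cons_head]

lemma card_nthRootsFinset_erase_one {K : Type*} [Field K] [IsAlgClosed K] [DecidableEq K] {m : ℕ}
    (hm : (m : K) ≠ 0) : ((nthRootsFinset m (1 : K)).erase 1).card = m - 1 := by
  have hm0 : m ≠ 0 := by rintro rfl; simp at hm
  have hmul := X_pow_sub_C_one_eq_mul_geom_sum (K := K) m
  have hdeg := congrArg natDegree hmul
  rw [natDegree_X_pow_sub_C, (monic_X_sub_C 1).natDegree_mul (monic_geom_sum_X hm0),
    natDegree_X_sub_C] at hdeg
  rw [Finset.card_def, nthRootsFinset_erase_one_val hm,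
    ← (IsAlgClosed.splits _).natDegree_eq_card_roots]
  omega

lemma norm_prod_roots_eval_sub {K : Type*} [NormedField K] {f g : K[X]} (hf : f.Monic)
    (hg : g.Monic) (hfs : f.Splits) (hgs : g.Splits) (c : K) :
    ‖(f.roots.map fun x => g.eval (x - c)).prod‖ =
      (g.roots.map fun y => ‖f.eval (c + y)‖).prod := by
  have hnorm (s : Multiset K) : ‖s.prod‖ = (s.map (‖·‖)).prod := map_multiset_prod normHom s
  conv_lhs => rw [hgs.eq_prod_roots_of_monic hg]
  conv_rhs => rw [hfs.eq_prod_roots_of_monic hf]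
  simp only [eval_multiset_prod, Multiset.map_map, Function.comp_def, eval_sub, eval_X, eval_C,
    hnorm]
  rw [Multiset.prod_map_prod_map]
  refine congrArg _ (Multiset.map_congr rfl fun y _ => congrArg _ (Multiset.map_congr rfl
    fun x _ => ?_))
  rw [norm_sub_rev]
  congr 1
  ring

lemma prod_roots_map_eval_eq_resultant {R K : Type*} [CommRing R] [Field K] (φ : R →+* K)
    {f : R[X]} (hf : f.Monic) (hs : (f.map φ).Splits) (g : R[X]) :
    ((f.map φ).roots.map fun x => (g.map φ).eval x).prod =
      φ (resultant f g f.natDegree g.natDegree) := by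
  rw [← resultant_map_map, ← hf.natDegree_map φ,
    resultant_eq_prod_eval _ _ _ natDegree_map_le hs, (hf.map φ).leadingCoeff, one_pow, one_mul]

lemma norm_prod_nthRootsFinset_erase_one_eval_sub_one {K : Type*} [NormedField K]
    [IsAlgClosed K] [DecidableEq K] {m : ℕ} (hm : (m : K) ≠ 0) {P : K[X]} (hP : P.Monic) :
    ‖∏ ζ ∈ (nthRootsFinset m (1 : K)).erase 1, P.eval (ζ - 1)‖ =
      (P.roots.map fun α => ‖∑ i ∈ Finset.range m, (1 + α) ^ i‖).prod := by
  have hm0 : m ≠ 0 := by rintro rfl; simp at hm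
  rw [Finset.prod_eq_multiset_prod, nthRootsFinset_erase_one_val hm,
    norm_prod_roots_eval_sub (monic_geom_sum_X hm0) hP (IsAlgClosed.splits _)
      (IsAlgClosed.splits _)]
  simp [eval_finsetSum]

lemma exists_prod_nthRootsFinset_erase_one_eval_sub_one_eq {R K : Type*} [CommRing R] [Field K]
    [IsAlgClosed K] [DecidableEq K] (φ : R →+* K) {m : ℕ} (hm : (m : K) ≠ 0) (Q : R[X]) :
    ∃ r : R, ∏ ζ ∈ (nthRootsFinset m (1 : K)).erase 1, (Q.map φ).eval (ζ - 1) = φ r := by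
  have hm0 : m ≠ 0 := by rintro rfl; simp at hm
  refine ⟨resultant (∑ i ∈ Finset.range m, (X : R[X]) ^ i) (Q.comp (X - C 1)), ?_⟩
  rw [Finset.prod_eq_multiset_prod, nthRootsFinset_erase_one_val hm,
    ← prod_roots_map_eval_eq_resultant φ (monic_geom_sum_X hm0) (IsAlgClosed.splits _)]
  simp [Polynomial.map_sum, Polynomial.map_comp, eval_comp]

lemma eventually_norm_prod_nthRootsFinset_erase_one_eval_sub_one_succ {L : Type*}
    [NormedField L] [IsUltrametricDist L] [IsAlgClosed L] [DecidableEq L] {p : ℕ}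
    [Fact p.Prime] (hp0 : (p : L) ≠ 0) (hp1 : ‖(p : L)‖ < 1) {P : L[X]} (hP : P.Monic)
    (hroots : ∀ α ∈ P.roots, ‖α‖ < 1) :
    ∀ᶠ n in atTop, ‖∏ ζ ∈ (nthRootsFinset (p ^ (n + 1)) (1 : L)).erase 1, P.eval (ζ - 1)‖ =
      ‖(p : L)‖ ^ P.natDegree *
        ‖∏ ζ ∈ (nthRootsFinset (p ^ n) (1 : L)).erase 1, P.eval (ζ - 1)‖ := by
  have hpn (n : ℕ) : ((p ^ n : ℕ) : L) ≠ 0 := by push_cast; exact pow_ne_zero n hp0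
  filter_upwards [Multiset.eventually_prod_map_succ
    (g := fun α n => ‖∑ i ∈ Finset.range (p ^ n), (1 + α) ^ i‖) P.roots
    fun α hα => eventually_norm_geom_sum_prime_pow_succ hp0 hp1 (hroots α hα)] with n hn
  rw [norm_prod_nthRootsFinset_erase_one_eval_sub_one (hpn _) hP,
    norm_prod_nthRootsFinset_erase_one_eval_sub_one (hpn _) hP, hn,
    (IsAlgClosed.splits P).natDegree_eq_card_roots]

lemma hasSum_algebraMap_coeff_coe_mul_pow {R L : Type*} [CommSemiring R] [CommSemiring L]
    [TopologicalSpace L] [Algebra R L] (Q : R[X]) (t : L) :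
    HasSum (fun i => algebraMap R L (PowerSeries.coeff i (Q : PowerSeries R)) * t ^ i)
      ((Q.map (algebraMap R L)).eval t) := by
  simp_rw [Polynomial.coeff_coe]
  rw [eval_map, eval₂_eq_sum_range]
  exact hasSum_sum_of_ne_finset_zero fun i hi => by
    simp [coeff_eq_zero_of_natDegree_lt (by simpa [Nat.lt_succ_iff] using hi)]

section PadicPowerSeries

variable {p : ℕ} [Fact p.Prime] {L : Type*} [NormedField L] [Algebra ℤ_[p] L]

lemma isUltrametricDist_of_norm_algebraMap
    (hnorm : ∀ x : ℤ_[p], ‖algebraMap ℤ_[p] L x‖ = ‖x‖) : IsUltrametricDist L :=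
  IsUltrametricDist.isUltrametricDist_of_forall_norm_natCast_le_one fun n => by
    rw [← map_natCast (algebraMap ℤ_[p] L), hnorm]
    exact PadicInt.norm_le_one _

lemma norm_natCast_eq_inv_of_norm_algebraMap
    (hnorm : ∀ x : ℤ_[p], ‖algebraMap ℤ_[p] L x‖ = ‖x‖) : ‖(p : L)‖ = (p : ℝ)⁻¹ := by
  rw [← map_natCast (algebraMap ℤ_[p] L), hnorm, PadicInt.norm_p]

lemma norm_lt_one_of_isRoot_map [IsUltrametricDist L]
    (hnorm : ∀ x : ℤ_[p], ‖algebraMap ℤ_[p] L x‖ = ‖x‖) {P : ℤ_[p][X]} (hPmon : P.Monic)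
    (hPdist : ∀ i < P.natDegree, (p : ℤ_[p]) ∣ P.coeff i) {α : L}
    (hα : (P.map (algebraMap ℤ_[p] L)).IsRoot α) : ‖α‖ < 1 := by
  by_contra! h1
  set d := P.natDegree
  have heval : α ^ d = -∑ i ∈ Finset.range d, algebraMap ℤ_[p] L (P.coeff i) * α ^ i := by
    have h := hα.eq_zero
    rw [(hPmon.map (algebraMap ℤ_[p] L)).as_sum, hPmon.natDegree_map] at h
    simp only [eval_add, eval_pow, eval_X, eval_finsetSum, eval_mul, eval_C, coeff_map] at h
    exact eq_neg_of_add_eq_zero_left h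
  have hle : ‖α ^ d‖ ≤ (p : ℝ)⁻¹ * ‖α‖ ^ d := by
    rw [heval, norm_neg]
    refine IsUltrametricDist.norm_sum_le_of_forall_le_of_nonneg (by positivity) fun i hi => ?_
    obtain ⟨c, hc⟩ := hPdist i (Finset.mem_range.mp hi)
    rw [norm_mul, hnorm, hc, norm_mul, PadicInt.norm_p, norm_pow]
    exact mul_le_mul (mul_le_of_le_one_right (by positivity) (PadicInt.norm_le_one c))
      (pow_le_pow_right₀ h1 (Finset.mem_range.mp hi).le) (by positivity) (by positivity)
  have hp : (p : ℝ)⁻¹ < 1 := inv_lt_one_of_one_lt₀ (mod_cast (Fact.out : p.Prime).one_lt)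
  rw [norm_pow] at hle
  nlinarith [one_le_pow₀ h1 (n := d)]

lemma summable_norm_algebraMap_coeff_mul_pow
    (hnorm : ∀ x : ℤ_[p], ‖algebraMap ℤ_[p] L x‖ = ‖x‖) (g : PowerSeries ℤ_[p]) {t : L}
    (ht : ‖t‖ < 1) : Summable fun i => ‖algebraMap ℤ_[p] L (PowerSeries.coeff i g) * t ^ i‖ :=
  (summable_geometric_of_lt_one (norm_nonneg t) ht).of_nonneg_of_le (fun _ => norm_nonneg _)
    fun i => by
      rw [norm_mul, hnorm, norm_pow]
      exact mul_le_of_le_one_left (by positivity) (PadicInt.norm_le_one _)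

lemma hasSum_algebraMap_coeff_mul_mul_pow [CompleteSpace L]
    (hnorm : ∀ x : ℤ_[p], ‖algebraMap ℤ_[p] L x‖ = ‖x‖) (g h : PowerSeries ℤ_[p]) {t : L}
    (ht : ‖t‖ < 1) :
    HasSum (fun i => algebraMap ℤ_[p] L (PowerSeries.coeff i (g * h)) * t ^ i)
      ((∑' i, algebraMap ℤ_[p] L (PowerSeries.coeff i g) * t ^ i) *
        ∑' i, algebraMap ℤ_[p] L (PowerSeries.coeff i h) * t ^ i) := by
  have hg := summable_norm_algebraMap_coeff_mul_pow hnorm g ht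
  have hh := summable_norm_algebraMap_coeff_mul_pow hnorm h ht
  have hcauchy : (fun n => algebraMap ℤ_[p] L (PowerSeries.coeff n (g * h)) * t ^ n) =
      fun n => ∑ kl ∈ Finset.HasAntidiagonal.antidiagonal n,
        algebraMap ℤ_[p] L (PowerSeries.coeff kl.1 g) * t ^ kl.1 *
          (algebraMap ℤ_[p] L (PowerSeries.coeff kl.2 h) * t ^ kl.2) := by
    funext n
    rw [PowerSeries.coeff_mul, map_sum, Finset.sum_mul]
    refine Finset.sum_congr rfl fun kl hkl => ?_
    rw [← Finset.HasAntidiagonal.mem_antidiagonal.mp hkl, pow_add, map_mul]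
    ring
  rw [hcauchy, tsum_mul_tsum_eq_tsum_sum_antidiagonal_of_summable_norm hg hh]
  exact (summable_norm_sum_mul_antidiagonal_of_summable_norm hg hh).of_norm.hasSum

lemma norm_tsum_algebraMap_coeff_mul_pow_of_isUnit [CompleteSpace L] [IsUltrametricDist L]
    (hnorm : ∀ x : ℤ_[p], ‖algebraMap ℤ_[p] L x‖ = ‖x‖) {u : PowerSeries ℤ_[p]} (hu : IsUnit u)
    {t : L} (ht : ‖t‖ < 1) :
    ‖∑' i, algebraMap ℤ_[p] L (PowerSeries.coeff i u) * t ^ i‖ = 1 := by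
  have hb0 : ‖algebraMap ℤ_[p] L (PowerSeries.coeff 0 u) * t ^ 0‖ = 1 := by
    rw [pow_zero, mul_one, hnorm, PowerSeries.coeff_zero_eq_constantCoeff_apply]
    exact PadicInt.isUnit_iff.mp (PowerSeries.isUnit_iff_constantCoeff.mp hu)
  have htail : ‖∑' i, algebraMap ℤ_[p] L (PowerSeries.coeff (i + 1) u) * t ^ (i + 1)‖ < 1 := by
    refine (IsUltrametricDist.norm_tsum_le_of_forall_le_of_nonneg (norm_nonneg t)
      fun i => ?_).trans_lt ht
    rw [norm_mul, hnorm, norm_pow]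
    exact mul_le_of_le_one_left (norm_nonneg t) (PadicInt.norm_le_one _) |>.trans'
      (mul_le_mul_of_nonneg_left (pow_le_of_le_one (norm_nonneg t) ht.le (by omega))
        (norm_nonneg _)) |>.trans (by simp)
  rw [(summable_norm_algebraMap_coeff_mul_pow hnorm u ht).of_norm.tsum_eq_zero_add,
    IsUltrametricDist.norm_add_eq_max_of_norm_ne_norm (by rw [hb0]; exact htail.ne'), hb0,
    max_eq_left htail.le]

lemma norm_eq_of_hasSum_of_eq_mul_isUnit [CompleteSpace L] [IsUltrametricDist L]
    (hnorm : ∀ x : ℤ_[p], ‖algebraMap ℤ_[p] L x‖ = ‖x‖) {f u : PowerSeries ℤ_[p]}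
    (Q : ℤ_[p][X]) (hu : IsUnit u) (hf : f = Q * u) {t y : L} (ht : ‖t‖ < 1)
    (hy : HasSum (fun i => algebraMap ℤ_[p] L (PowerSeries.coeff i f) * t ^ i) y) :
    ‖y‖ = ‖(Q.map (algebraMap ℤ_[p] L)).eval t‖ := by
  subst hf
  rw [hy.unique (hasSum_algebraMap_coeff_mul_mul_pow hnorm _ _ ht),
    (hasSum_algebraMap_coeff_coe_mul_pow Q t).tsum_eq, norm_mul,
    norm_tsum_algebraMap_coeff_mul_pow_of_isUnit hnorm hu ht, mul_one]

lemma norm_eq_of_hasSum_of_eq_C_pow_mul_mul_isUnit [CompleteSpace L] [IsUltrametricDist L]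
    (hnorm : ∀ x : ℤ_[p], ‖algebraMap ℤ_[p] L x‖ = ‖x‖) {f u : PowerSeries ℤ_[p]} {μ : ℕ}
    {P : ℤ_[p][X]} (hu : IsUnit u)
    (hf : f = PowerSeries.C ((p : ℤ_[p]) ^ μ) * (P : PowerSeries ℤ_[p]) * u) {t y : L}
    (ht : ‖t‖ < 1) (hy : HasSum (fun i => algebraMap ℤ_[p] L (PowerSeries.coeff i f) * t ^ i) y) :
    ‖y‖ = ‖(p : L)‖ ^ μ * ‖(P.map (algebraMap ℤ_[p] L)).eval t‖ := by
  rw [norm_eq_of_hasSum_of_eq_mul_isUnit hnorm (Polynomial.C ((p : ℤ_[p]) ^ μ) * P) hu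
    (by rw [hf, Polynomial.coe_mul, Polynomial.coe_C]) ht hy, Polynomial.map_mul,
    Polynomial.map_C, eval_mul, eval_C, norm_mul, map_pow, map_natCast, norm_pow]

lemma exists_norm_prod_nthRootsFinset_erase_one_eval_sub_one_eq [IsUltrametricDist L]
    [IsAlgClosed L] [DecidableEq L] (hnorm : ∀ x : ℤ_[p], ‖algebraMap ℤ_[p] L x‖ = ‖x‖)
    {P : ℤ_[p][X]} (hPmon : P.Monic) (hPdist : ∀ i < P.natDegree, (p : ℤ_[p]) ∣ P.coeff i) :
    ∃ N, ∃ r : ℤ_[p], ∏ ζ ∈ (nthRootsFinset (p ^ N) (1 : L)).erase 1,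
        (P.map (algebraMap ℤ_[p] L)).eval (ζ - 1) = algebraMap ℤ_[p] L r ∧
      ∀ k, ‖∏ ζ ∈ (nthRootsFinset (p ^ (N + k)) (1 : L)).erase 1,
        (P.map (algebraMap ℤ_[p] L)).eval (ζ - 1)‖ = ((p : ℝ)⁻¹ ^ P.natDegree) ^ k * ‖r‖ := by
  have hpL := norm_natCast_eq_inv_of_norm_algebraMap (L := L) hnorm
  have hp : p.Prime := Fact.out
  have hp0 : (p : L) ≠ 0 := norm_ne_zero_iff.mp (hpL ▸ inv_ne_zero (mod_cast hp.ne_zero))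
  obtain ⟨N, hN⟩ := exists_forall_add_eq_pow_mul
    (g := fun n => ‖∏ ζ ∈ (nthRootsFinset (p ^ n) (1 : L)).erase 1,
      (P.map (algebraMap ℤ_[p] L)).eval (ζ - 1)‖)
    (eventually_norm_prod_nthRootsFinset_erase_one_eval_sub_one_succ hp0
      (hpL ▸ inv_lt_one_of_one_lt₀ (mod_cast hp.one_lt)) (hPmon.map _)
      fun α hα => norm_lt_one_of_isRoot_map hnorm hPmon hPdist (isRoot_of_mem_roots hα))
  obtain ⟨r, hr⟩ := exists_prod_nthRootsFinset_erase_one_eval_sub_one_eq (algebraMap ℤ_[p] L)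
    (m := p ^ N) (by push_cast; exact pow_ne_zero N hp0) P
  refine ⟨N, r, hr, fun k => ?_⟩
  rw [hN, hr, hnorm, hPmon.natDegree_map, hpL]

end PadicPowerSeries

open scoped Classical

theorem stmt19_general (p : ℕ) [Fact p.Prime]
    (f : PowerSeries ℤ_[p])
    (μ lam : ℕ) (P : Polynomial ℤ_[p]) (u : PowerSeries ℤ_[p])
    (hu : IsUnit u) (hPmon : P.Monic)
    (hPdist : ∀ i < P.natDegree, (p : ℤ_[p]) ∣ P.coeff i)
    (hdeg : P.natDegree = lam)
    (hdec : f = PowerSeries.C ((p : ℤ_[p]) ^ μ) * (P : PowerSeries ℤ_[p]) * u)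
    (L : Type) [NormedField L] [CompleteSpace L] [IsAlgClosed L] [Algebra ℤ_[p] L]
    (hnorm : ∀ x : ℤ_[p], ‖algebraMap ℤ_[p] L x‖ = ‖x‖)
    (F : L → L)
    (hF : ∀ ζ : L, HasSum
      (fun i : ℕ => algebraMap ℤ_[p] L (PowerSeries.coeff i f) * (ζ - 1) ^ i) (F ζ))
    (hne : ∀ n : ℕ, ∀ ζ : L, ζ ^ (p ^ n) = 1 → ζ ≠ 1 → F ζ ≠ 0) :
    ∃ ν : ℤ, ∃ N : ℕ, ∀ n ≥ N,
      ‖∏ ζ ∈ (Polynomial.nthRootsFinset (p ^ n) (1 : L)).erase 1, F ζ‖ =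
        (p : ℝ) ^ (-((p ^ n * μ + n * lam : ℕ) + ν)) := by
  have hp : p.Prime := Fact.out
  set ι := algebraMap ℤ_[p] L
  have := isUltrametricDist_of_norm_algebraMap hnorm
  have hpL := norm_natCast_eq_inv_of_norm_algebraMap (L := L) hnorm
  have hp0 : (p : L) ≠ 0 := norm_ne_zero_iff.mp (hpL ▸ inv_ne_zero (mod_cast hp.ne_zero))
  have hmem {n : ℕ} {ζ : L} (hζ : ζ ∈ (nthRootsFinset (p ^ n) (1 : L)).erase 1) :
      ζ ^ p ^ n = 1 ∧ ζ ≠ 1 :=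
    ⟨(mem_nthRootsFinset (pow_pos hp.pos n) 1).mp (Finset.mem_of_mem_erase hζ),
      Finset.ne_of_mem_erase hζ⟩
  have hnormF {n : ℕ} {ζ : L} (hζ : ζ ^ p ^ n = 1) :
      ‖F ζ‖ = ‖(p : L)‖ ^ μ * ‖(P.map ι).eval (ζ - 1)‖ :=
    norm_eq_of_hasSum_of_eq_C_pow_mul_mul_isUnit hnorm hu hdec
      (norm_sub_one_lt_one_of_pow_eq_one (hpL ▸ inv_lt_one_of_one_lt₀ (mod_cast hp.one_lt)) hζ)
      (hF ζ)
  obtain ⟨N, r, hr, hN⟩ :=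
    exists_norm_prod_nthRootsFinset_erase_one_eval_sub_one_eq hnorm hPmon hPdist
  have hr0 : r ≠ 0 := by
    rintro rfl
    obtain ⟨ζ, hζ, hζ0⟩ := Finset.prod_eq_zero_iff.mp (hr.trans (map_zero ι))
    refine hne N ζ (hmem hζ).1 (hmem hζ).2 (norm_eq_zero.mp ?_)
    rw [hnormF (hmem hζ).1, hζ0, norm_zero, mul_zero]
  refine ⟨r.valuation - N * lam - μ, N, fun n hn => ?_⟩
  obtain ⟨k, rfl⟩ := Nat.exists_eq_add_of_le hn
  have hpR : (p : ℝ) ≠ 0 := mod_cast hp.ne_zero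
  have hcard : ((nthRootsFinset (p ^ (N + k)) (1 : L)).erase 1).card = p ^ (N + k) - 1 :=
    card_nthRootsFinset_erase_one (by push_cast; exact pow_ne_zero _ hp0)
  rw [norm_prod, Finset.prod_congr rfl fun ζ hζ => hnormF (hmem hζ).1, Finset.prod_mul_distrib,
    Finset.prod_const, hcard, ← pow_mul, ← norm_prod, hN, hdeg,
    PadicInt.norm_eq_zpow_neg_valuation hr0, hpL, ← zpow_neg_one]
  simp only [← zpow_natCast, ← zpow_mul, ← zpow_add₀ hpR]
  congr 1
  push_cast [Nat.one_le_pow _ _ hp.pos]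
  ring

/-- Let `f ∈ ℤ_p[[X]]` be nonzero with Weierstrass decomposition
`f = p^μ P u` (`P` distinguished of degree `λ`, `u` a unit). Evaluate `f` in a
complete algebraically closed normed field `L` whose norm extends the `p`-adic
norm of `ℤ_p` (so that the series `F ζ = Σ coeff_i(f)·(ζ−1)^i` converges for
`p^n`-th roots of unity `ζ`). If `F ζ ≠ 0` for every nontrivial `p^n`-th root
of unity `ζ`, then for all sufficiently large `n` the total `p`-adic valuation
of `Π_{ζ^{p^n}=1, ζ≠1} F ζ` equals `p^n μ + n λ + ν` for a constant `ν`
independent of `n`; equivalently the norm of the product is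
`p^{−(p^n μ + n λ + ν)}`. -/
theorem stmt19 (p : ℕ) [Fact p.Prime]
    (f : PowerSeries ℤ_[p]) (hf : f ≠ 0)
    (μ lam : ℕ) (P : Polynomial ℤ_[p]) (u : PowerSeries ℤ_[p])
    (hu : IsUnit u) (hPmon : P.Monic)
    (hPdist : ∀ i < P.natDegree, (p : ℤ_[p]) ∣ P.coeff i)
    (hdeg : P.natDegree = lam)
    (hdec : f = PowerSeries.C ((p : ℤ_[p]) ^ μ) * (P : PowerSeries ℤ_[p]) * u)
    (L : Type) [NormedField L] [CompleteSpace L] [IsAlgClosed L] [Algebra ℤ_[p] L]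
    (hnorm : ∀ x : ℤ_[p], ‖algebraMap ℤ_[p] L x‖ = ‖x‖)
    (F : L → L)
    (hF : ∀ ζ : L, HasSum
      (fun i : ℕ => algebraMap ℤ_[p] L (PowerSeries.coeff i f) * (ζ - 1) ^ i) (F ζ))
    (hne : ∀ n : ℕ, ∀ ζ : L, ζ ^ (p ^ n) = 1 → ζ ≠ 1 → F ζ ≠ 0) :
    ∃ ν : ℤ, ∃ N : ℕ, ∀ n ≥ N,
      ‖∏ ζ ∈ (Polynomial.nthRootsFinset (p ^ n) (1 : L)).erase 1, F ζ‖ =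
        (p : ℝ) ^ (-((p ^ n * μ + n * lam : ℕ) + ν)) :=
  stmt19_general p f μ lam P u hu hPmon hPdist hdeg hdec L hnorm F hF hne
end
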